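/- Let (P, Q₁) and (P, Q₂) be two strong (k+1)-unbounded pairs such that there exists f ∈ Q₁ ∩ Q₂ with {g ∈ Q₁ : g ≥ f} = {g ∈ Q₂ : g ≥ f}. Then a set E is (k+1)-twistable for (P, Q₁) if and only if it is (k+1)-twistable for (P, Q₂). -/

import Mathlib

open Cardinal Set

variable {X : Type*}

/-- `f ≤* g`: `f x ≤ g x` for all but finitely many `x`. -/
def LeStar (f g : X → ℕ) : Prop := {x | ¬ f x ≤ g x}.Finite

/-- `f <* g`: strict version of `≤*`. -/
def LtStar (f g : X → ℕ) : Prop := LeStar f g ∧ ¬ LeStar g f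

/-- The *sottografico* of `f`: pairs `(i, j)` with `1 ≤ j ≤ f i`. -/
def Sotto (f : X → ℕ) : Set (X × ℕ) := {p | 1 ≤ p.2 ∧ p.2 ≤ f p.1}

/-- `D` is `≤*`-cofinal in `S`. -/
def CofinalIn (D S : Set (X → ℕ)) : Prop := D ⊆ S ∧ ∀ f ∈ S, ∃ g ∈ D, LeStar f g

/-- The `≤*`-cofinality of `S`: least cardinality of a `≤*`-cofinal subset. -/
noncomputable def cofStar (S : Set (X → ℕ)) : Cardinal :=
  sInf {c | ∃ D : Set (X → ℕ), CofinalIn D S ∧ Cardinal.mk D = c}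

/-- `P` is a `≤*`-order-ideal (downward closed). -/
def IsIdealStar (P : Set (X → ℕ)) : Prop := ∀ f g, LeStar f g → g ∈ P → f ∈ P

/-- `r` enumerates a `κ`-spine in `Q`: a `<*`-increasing enumeration, indexed by the
ordinals below `κ`, of a `≤*`-cofinal subset of `Q`. -/
def IsSpine (κ : Cardinal) (Q : Set (X → ℕ)) (r : Ordinal → (X → ℕ)) : Prop :=
  (∀ β < κ.ord, r β ∈ Q) ∧
  (∀ β γ : Ordinal, β < γ → γ < κ.ord → LtStar (r β) (r γ)) ∧
  (∀ q ∈ Q, ∃ β < κ.ord, LeStar q (r β))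

/-- `(P, Q)` is a `κ`-unbounded pair with respect to `≤*`. -/
def IsUnboundedPair (κ : Cardinal) (P Q : Set (X → ℕ)) : Prop :=
  Q ⊆ P ∧ DirectedOn LeStar P ∧ cofStar P = κ ∧ cofStar Q = κ ∧
  (∀ f ∈ P, ∃ q ∈ Q, ¬ LeStar q f) ∧ ∃ r : Ordinal → (X → ℕ), IsSpine κ Q r

/-- `Q` is a strong chain: well-ordered, and the identity induces an isomorphism
between `(Q, ≤)` and `(Q, ≤*)`. -/
def IsStrongChain (Q : Set (X → ℕ)) : Prop :=
  (∀ f ∈ Q, ∀ g ∈ Q, LeStar f g ↔ f ≤ g) ∧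
  (∀ f ∈ Q, ∀ g ∈ Q, f ≤ g ∨ g ≤ f) ∧
  Q.WellFoundedOn (fun f g => LtStar f g)

/-- A strong `κ`-unbounded pair. -/
def IsStrongUnboundedPair (κ : Cardinal) (P Q : Set (X → ℕ)) : Prop :=
  IsUnboundedPair κ P Q ∧ IsStrongChain Q

/-- `(Pa, Q')` is a `κ`-spine filtration for `(P, Q)`: a continuous increasing
filtration of `P` by `≤*`-order-ideals of cofinality `< κ` together with a `κ`-spine
`Q'` in `Q` whose order type inside `Pa β` is exactly `β`. -/
def IsSpineFiltration (κ : Cardinal) (P Q : Set (X → ℕ))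
    (Pa : Ordinal → Set (X → ℕ)) (Q' : Ordinal → (X → ℕ)) : Prop :=
  (∀ β γ : Ordinal, β ≤ γ → Pa β ⊆ Pa γ) ∧
  (∀ β : Ordinal, Order.IsSuccLimit β → β < κ.ord → Pa β = ⋃ γ ∈ Set.Iio β, Pa γ) ∧
  (⋃ β ∈ Set.Iio κ.ord, Pa β) = P ∧
  (∀ β < κ.ord, IsIdealStar (Pa β)) ∧
  (∀ β < κ.ord, cofStar (Pa β) < κ) ∧
  IsSpine κ Q Q' ∧
  (∀ β γ : Ordinal, β < κ.ord → γ < κ.ord → (Q' γ ∈ Pa β ↔ γ < β))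

/-- `S^{k+1}_k`: ordinals below `ω_{k+1}` of cofinality `ω_k`. -/
def Sk (k : ℕ) : Set Ordinal :=
  {α | α < (Cardinal.aleph (k + 1)).ord ∧ α.cof = Cardinal.aleph k}

/-- `E` is a `k`-twistable set for the pair `(P, Q)`.  For `k = 0` this means `E` is
countably infinite with finite intersection with every sottografico from `P`; for
`k + 1` it means that for some `ℵ_{k+1}`-spine filtration `(Pa, Q')` of `(P, Q)`, `E`
decomposes as `⋃⟨E_α : α ∈ {0} ∪ S^{k+1}_k⟩` with `|E_0| ≤ ℵ_k`, `E_α ⊆ I(Q'(α))`,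
each `E_α` `k`-twistable for `(Pa α, Q' ↾ α)`, and `E_α` contained in the union of the
earlier pieces at limit points `α` of `S^{k+1}_k`. -/
def TwistablePair : ℕ → Set (X → ℕ) → Set (X → ℕ) → Set (X × ℕ) → Prop
  | 0, P, _Q, E => E.Infinite ∧ E.Countable ∧ ∀ f ∈ P, (E ∩ Sotto f).Finite
  | (k + 1), P, Q, E =>
      ∃ (Pa : Ordinal → Set (X → ℕ)) (Q' : Ordinal → (X → ℕ)),
        IsSpineFiltration (Cardinal.aleph (k + 1)) P Q Pa Q' ∧
        ∃ Ef : Ordinal → Set (X × ℕ),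
          (E = Ef 0 ∪ ⋃ α ∈ Sk k, Ef α) ∧
          Cardinal.mk (Ef 0) ≤ Cardinal.aleph k ∧
          Ef 0 ⊆ Sotto (Q' 0) ∧
          (∀ α ∈ Sk k, Ef α ⊆ Sotto (Q' α)) ∧
          (∀ α ∈ Sk k, TwistablePair k (Pa α) {f | ∃ β < α, f = Q' β} (Ef α)) ∧
          (∀ α ∈ Sk k, α = sSup (Sk k ∩ Set.Iio α) →
            Ef α ⊆ Ef 0 ∪ ⋃ β ∈ Sk k ∩ Set.Iio α, Ef β)

/-- `E` is `(k+1)`-twistable for the given spine filtration `(Pa, Q')`. -/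
def TwistableFilt (k : ℕ) (Pa : Ordinal → Set (X → ℕ)) (Q' : Ordinal → (X → ℕ))
    (E : Set (X × ℕ)) : Prop :=
  ∃ Ef : Ordinal → Set (X × ℕ),
    (E = Ef 0 ∪ ⋃ α ∈ Sk k, Ef α) ∧
    Cardinal.mk (Ef 0) ≤ Cardinal.aleph k ∧
    Ef 0 ⊆ Sotto (Q' 0) ∧
    (∀ α ∈ Sk k, Ef α ⊆ Sotto (Q' α)) ∧
    (∀ α ∈ Sk k, TwistablePair k (Pa α) {f | ∃ β < α, f = Q' β} (Ef α)) ∧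
    (∀ α ∈ Sk k, α = sSup (Sk k ∩ Set.Iio α) →
      Ef α ⊆ Ef 0 ∪ ⋃ β ∈ Sk k ∩ Set.Iio α, Ef β)

section Aux

variable {X : Type*}

theorem leStar_of_le {f g : X → ℕ} (h : f ≤ g) : LeStar f g := by
  have he : {x | ¬ f x ≤ g x} = ∅ := by ext x; simp [h x]
  rw [LeStar, he]; exact Set.finite_empty

theorem LeStar.trans' {f g h : X → ℕ} (h1 : LeStar f g) (h2 : LeStar g h) : LeStar f h := by
  apply (h1.union h2).subset
  intro x hx
  simp only [Set.mem_setOf_eq, Set.mem_union] at *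
  by_contra hc
  push_neg at hc
  exact hx (le_trans hc.1 hc.2)

theorem sotto_mono {f g : X → ℕ} (h : f ≤ g) : Sotto f ⊆ Sotto g :=
  fun p hp => ⟨hp.1, hp.2.trans (h p.1)⟩

theorem Sk_ne_zero {k : ℕ} {α : Ordinal} (h : α ∈ Sk k) : α ≠ 0 := by
  intro h0
  have := h.2
  rw [h0, Ordinal.cof_zero] at this
  exact absurd this.symm (Cardinal.aleph_pos k).ne'

theorem Sk_isLimit {k : ℕ} {α : Ordinal} (h : α ∈ Sk k) : Order.IsSuccLimit α := by
  rw [← Ordinal.aleph0_le_cof, h.2]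
  exact Cardinal.aleph0_le_aleph _

theorem add_lt_ord {c : Cardinal} (hc : Cardinal.aleph0 ≤ c) {β γ : Ordinal} (hβ : β < c.ord)
    (hγ : γ < c.ord) : β + γ < c.ord := by
  rw [Cardinal.lt_ord] at *
  rw [Ordinal.card_add]
  exact Cardinal.add_lt_of_lt hc hβ hγ

theorem Sk_add_mem {k : ℕ} (β₀ : Ordinal) {α : Ordinal} (hβ₀ : β₀ < (Cardinal.aleph (k+1)).ord)
    (h : α ∈ Sk k) : β₀ + α ∈ Sk k := by
  refine ⟨add_lt_ord (Cardinal.aleph0_le_aleph _) hβ₀ h.1, ?_⟩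
  rw [Ordinal.cof_add _ (Sk_ne_zero h)]
  exact h.2

theorem Sk_sub_mem {k : ℕ} {β₀ δ : Ordinal} (h : δ ∈ Sk k) (hlt : β₀ < δ) :
    δ - β₀ ∈ Sk k ∧ β₀ + (δ - β₀) = δ := by
  have hle : β₀ ≤ δ := hlt.le
  have hadd : β₀ + (δ - β₀) = δ := Ordinal.add_sub_cancel_of_le hle
  have hne : δ - β₀ ≠ 0 := by
    intro h0
    rw [h0, add_zero] at hadd
    exact hlt.ne hadd
  refine ⟨⟨lt_of_le_of_lt ?_ h.1, ?_⟩, hadd⟩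
  · exact Ordinal.sub_le_self δ β₀
  · have := Ordinal.cof_add β₀ hne
    rw [hadd] at this
    rw [← this, h.2]

universe u

theorem mk_biUnion_le_of_subset_Iio {A : Type u} {o : Ordinal.{u}} (ho : o ≠ 0)
    {S : Set Ordinal.{u}} (hS : S ⊆ Set.Iio o) (F : Ordinal.{u} → Set A) {c : Cardinal.{u}}
    (hc : ∀ α ∈ S, Cardinal.mk (F α) ≤ c) :
    Cardinal.mk ↥(⋃ α ∈ S, F α) ≤ o.card * c := by
  have hne : Nonempty o.ToType := Ordinal.nonempty_toType_iff.2 ho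
  set e := Ordinal.ToType.mk (o := o) with he
  set G : o.ToType → Set A := fun i => ⋃ (_ : (e.symm i : Ordinal) ∈ S), F (e.symm i) with hG
  have heq : ⋃ α ∈ S, F α = ⋃ i, G i := by
    ext x
    simp only [Set.mem_iUnion, hG]
    constructor
    · rintro ⟨α, hα, hx⟩
      refine ⟨e ⟨α, hS hα⟩, ?_⟩
      rw [e.symm_apply_apply]
      exact ⟨hα, hx⟩
    · rintro ⟨i, hi, hx⟩
      exact ⟨_, hi, hx⟩
  rw [heq]
  refine (Cardinal.mk_iUnion_le G).trans ?_
  rw [Cardinal.mk_toType]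
  refine mul_le_mul_right (ciSup_le' fun i => ?_) _
  by_cases hi : (e.symm i : Ordinal) ∈ S
  · refine le_trans (Cardinal.mk_le_mk_of_subset ?_) (hc _ hi)
    exact Set.iUnion_subset fun _ => subset_rfl
  · have hGi : G i = (∅ : Set A) := by
      apply Set.eq_empty_of_subset_empty
      intro x hx
      rw [Set.mem_iUnion] at hx
      exact absurd hx.1 hi
    rw [hGi]
    simp

theorem twistable_card_le : ∀ (k : ℕ) (P Q : Set (X → ℕ)) (E : Set (X × ℕ)),
    TwistablePair k P Q E → Cardinal.mk E ≤ Cardinal.aleph k := by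
  intro k
  induction k with
  | zero =>
    intro P Q E h
    have : E.Countable := h.2.1
    rw [Nat.cast_zero, Cardinal.aleph_zero]
    exact this.le_aleph0
  | succ k ih =>
    intro P Q E h
    obtain ⟨Pa, Q', hfil, Ef, hE, h0, -, -, htw, -⟩ := h
    rw [hE]
    have hbig : Cardinal.mk ↥(⋃ α ∈ Sk k, Ef α) ≤ Cardinal.aleph (k+1) := by
      have hord : ((Cardinal.aleph (k+1)).ord : Ordinal) ≠ 0 := by
        rw [Ne, Cardinal.ord_eq_zero]
        exact (Cardinal.aleph_pos _).ne'
      have := mk_biUnion_le_of_subset_Iio hord (fun α hα => hα.1) Ef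
        (fun α hα => ih _ _ _ (htw α hα))
      refine this.trans ?_
      rw [Cardinal.card_ord]
      calc Cardinal.aleph (k+1) * Cardinal.aleph k
          ≤ Cardinal.aleph (k+1) * Cardinal.aleph (k+1) := by
            refine mul_le_mul_right (Cardinal.aleph_le_aleph.2 ?_) _
            exact le_self_add
        _ = Cardinal.aleph (k+1) := Cardinal.mul_eq_self (Cardinal.aleph0_le_aleph _)
    refine (Cardinal.mk_union_le _ _).trans ?_
    refine Cardinal.add_le_of_le (Cardinal.aleph0_le_aleph _) (h0.trans ?_) hbig
    exact Cardinal.aleph_le_aleph.2 (by exact le_self_add)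

end Aux
section Tail

variable {X : Type*}

theorem twistable_of_tail (k : ℕ) (P Q : Set (X → ℕ)) (g : X → ℕ) (hg : g ∈ Q)
    (hlin : ∀ a ∈ Q, ∀ b ∈ Q, a ≤ b ∨ b ≤ a) (E : Set (X × ℕ))
    (h : TwistablePair k P {h | h ∈ Q ∧ g ≤ h} E) : TwistablePair k P Q E := by
  cases k with
  | zero => exact h
  | succ k =>
    obtain ⟨Pa, Q', ⟨hmono, hcont, hun, hid, hcof, ⟨hs1, hs2, hs3⟩, hmem⟩, rest⟩ := h
    refine ⟨Pa, Q', ⟨hmono, hcont, hun, hid, hcof, ⟨fun β hβ => (hs1 β hβ).1, hs2, ?_⟩, hmem⟩,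
      rest⟩
    intro q hq
    rcases hlin q hq g hg with hqg | hgq
    · obtain ⟨β, hβ, hgβ⟩ := hs3 g ⟨hg, le_refl g⟩
      exact ⟨β, hβ, (leStar_of_le hqg).trans' hgβ⟩
    · exact hs3 q ⟨hq, hgq⟩


theorem twistable_tail_of : ∀ (k : ℕ) (P Q : Set (X → ℕ)) (g : X → ℕ), g ∈ Q →
    (∀ a ∈ Q, ∀ b ∈ Q, LeStar a b ↔ a ≤ b) →
    ∀ E : Set (X × ℕ), TwistablePair k P Q E → TwistablePair k P {h | h ∈ Q ∧ g ≤ h} E := by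
  intro k
  induction k with
  | zero => intro P Q g hg hch E h; exact h
  | succ k ih =>
    intro P Q g hg hch E h
    obtain ⟨Pa, Q', ⟨hmono, hcont, hunion, hideal, hcof, ⟨hsp1, hsp2, hsp3⟩, hmem⟩,
      Ef, hE, h0card, h0sot, hsot, htw, hlim⟩ := h
    set κ := Cardinal.aleph (k + 1) with hκ
    have hκ0 : Cardinal.aleph0 ≤ κ := Cardinal.aleph0_le_aleph _
    -- the least index whose spine value dominates `g`
    obtain ⟨δ₀, hδ₀lt, hδ₀⟩ := hsp3 g hg
    have hBne : {β : Ordinal | β < κ.ord ∧ LeStar g (Q' β)}.Nonempty := ⟨δ₀, hδ₀lt, hδ₀⟩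
    set β₀ := sInf {β : Ordinal | β < κ.ord ∧ LeStar g (Q' β)} with hβ₀def
    have hβ₀B : β₀ < κ.ord ∧ LeStar g (Q' β₀) := csInf_mem hBne
    have hβ₀lt : β₀ < κ.ord := hβ₀B.1
    have hadd : ∀ β < κ.ord, β₀ + β < κ.ord := fun β hβ => add_lt_ord hκ0 hβ₀lt hβ
    -- pointwise monotonicity facts
    have hle : ∀ β γ : Ordinal, β ≤ γ → γ < κ.ord → Q' β ≤ Q' γ := by
      intro β γ hbg hγ
      rcases eq_or_lt_of_le hbg with rfl | hlt
      · exact le_refl _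
      · exact (hch _ (hsp1 _ (hlt.trans hγ)) _ (hsp1 _ hγ)).1 (hsp2 _ _ hlt hγ).1
    have hgle : ∀ β : Ordinal, β₀ ≤ β → β < κ.ord → g ≤ Q' β := by
      intro β hb hβ
      exact le_trans ((hch g hg _ (hsp1 _ hβ₀lt)).1 hβ₀B.2) (hle _ _ hb hβ)
    -- the shifted filtration and decomposition
    refine ⟨fun β => Pa (β₀ + β), fun β => Q' (β₀ + β),
      ⟨?_, ?_, ?_, ?_, ?_, ⟨?_, ?_, ?_⟩, ?_⟩,
      fun α => if α = 0 then Ef 0 ∪ ⋃ γ ∈ Sk k ∩ Set.Iic β₀, Ef γ else Ef (β₀ + α),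
      ?_, ?_, ?_, ?_, ?_, ?_⟩
    -- monotone
    · beta_reduce
      intro β γ hβγ
      exact hmono _ _ (add_le_add_right hβγ β₀)
    -- continuity at limits
    · beta_reduce
      intro β hβlim hβ
      rw [hcont _ (Ordinal.isSuccLimit_add β₀ hβlim) (hadd β hβ)]
      ext x
      simp only [Set.mem_iUnion, Set.mem_Iio, exists_prop]
      constructor
      · rintro ⟨γ, hγ, hx⟩
        rcases lt_or_ge γ β₀ with hc | hc
        · exact ⟨0, hβlim.pos, hmono _ _ (by rw [add_zero]; exact hc.le) hx⟩
        · refine ⟨γ - β₀, ?_, ?_⟩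
          · rwa [← add_lt_add_iff_left β₀, Ordinal.add_sub_cancel_of_le hc]
          · rwa [Ordinal.add_sub_cancel_of_le hc]
      · rintro ⟨γ, hγ, hx⟩
        exact ⟨β₀ + γ, add_lt_add_right hγ β₀, hx⟩
    -- union is P
    · beta_reduce
      ext x
      simp only [Set.mem_iUnion, Set.mem_Iio, exists_prop]
      constructor
      · rintro ⟨β, hβ, hx⟩
        rw [← hunion]
        exact Set.mem_biUnion (hadd β hβ) hx
      · intro hx
        rw [← hunion] at hx
        simp only [Set.mem_iUnion, Set.mem_Iio, exists_prop] at hx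
        obtain ⟨δ, hδ, hx⟩ := hx
        exact ⟨δ, hδ, hmono _ _ (le_add_self) hx⟩
    -- ideals
    · beta_reduce
      intro β hβ
      exact hideal _ (hadd _ hβ)
    -- cofinalities
    · beta_reduce
      intro β hβ
      exact hcof _ (hadd _ hβ)
    -- spine: membership
    · beta_reduce
      intro β hβ
      exact ⟨hsp1 _ (hadd _ hβ), hgle _ (le_self_add) (hadd _ hβ)⟩
    -- spine: increasing
    · beta_reduce
      intro β γ hβγ hγ
      exact hsp2 _ _ (add_lt_add_right hβγ β₀) (hadd _ hγ)
    -- spine: cofinal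
    · beta_reduce
      intro q hq
      obtain ⟨δ, hδ, hqδ⟩ := hsp3 q hq.1
      exact ⟨δ, hδ, hqδ.trans' (leStar_of_le (hle δ (β₀ + δ) (le_add_self)
        (hadd δ hδ)))⟩
    -- index of spine in filtration
    · beta_reduce
      intro β γ hβ hγ
      rw [hmem _ _ (hadd _ hβ) (hadd _ hγ)]
      exact add_lt_add_iff_left β₀
    -- decomposition of E
    · beta_reduce
      rw [if_pos rfl, hE]
      ext x
      simp only [Set.mem_union, Set.mem_iUnion, exists_prop, Set.mem_inter_iff, Set.mem_Iic]
      constructor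
      · rintro (hx | ⟨δ, hδ, hx⟩)
        · exact Or.inl (Or.inl hx)
        · rcases le_or_gt δ β₀ with hc | hc
          · exact Or.inl (Or.inr ⟨δ, ⟨hδ, hc⟩, hx⟩)
          · obtain ⟨hmemSk, hde⟩ := Sk_sub_mem hδ hc
            refine Or.inr ⟨δ - β₀, hmemSk, ?_⟩
            rw [if_neg (Sk_ne_zero hmemSk), hde]
            exact hx
      · rintro ((hx | ⟨γ, ⟨hγ, _⟩, hx⟩) | ⟨α, hα, hx⟩)
        · exact Or.inl hx
        · exact Or.inr ⟨γ, hγ, hx⟩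
        · rw [if_neg (Sk_ne_zero hα)] at hx
          exact Or.inr ⟨β₀ + α, Sk_add_mem β₀ hβ₀lt hα, hx⟩
    -- cardinality of the new root piece
    · beta_reduce
      rw [if_pos rfl]
      refine (Cardinal.mk_union_le _ _).trans ?_
      refine Cardinal.add_le_of_le (Cardinal.aleph0_le_aleph _) h0card ?_
      have hsucc : β₀ + 1 = Order.succ β₀ := Ordinal.add_one_eq_succ β₀
      have hsne : (β₀ + 1 : Ordinal) ≠ 0 := by rw [hsucc]; exact Order.succ_ne_bot β₀
      have hsub : Sk k ∩ Set.Iic β₀ ⊆ Set.Iio (β₀ + 1) := by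
        intro γ hγ
        rw [Set.mem_Iio, hsucc, Order.lt_succ_iff]
        exact hγ.2
      have hpieces : ∀ γ ∈ Sk k ∩ Set.Iic β₀, Cardinal.mk (Ef γ) ≤ Cardinal.aleph k :=
        fun γ hγ => twistable_card_le k _ _ _ (htw γ hγ.1)
      refine (mk_biUnion_le_of_subset_Iio hsne hsub Ef hpieces).trans ?_
      have hcard : (β₀ + 1 : Ordinal).card ≤ Cardinal.aleph k := by
        have hlt : (β₀ + 1 : Ordinal) < κ.ord := by
          rw [hsucc]
          exact (Cardinal.isSuccLimit_ord hκ0).succ_lt hβ₀lt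
        rw [Cardinal.lt_ord, hκ] at hlt
        have : Cardinal.aleph (↑k + 1) = Order.succ (Cardinal.aleph k) := by
          rw [Ordinal.add_one_eq_succ, Cardinal.aleph_succ]
        rw [this, Order.lt_succ_iff] at hlt
        exact hlt
      calc (β₀ + 1 : Ordinal).card * Cardinal.aleph k
          ≤ Cardinal.aleph k * Cardinal.aleph k := mul_le_mul_left hcard _
        _ = Cardinal.aleph k := Cardinal.mul_eq_self (Cardinal.aleph0_le_aleph _)
    -- root piece inside the sottografico of the new bottom spine element
    · beta_reduce
      rw [if_pos rfl]
      have hQβ₀ : Q' 0 ≤ Q' β₀ := hle 0 β₀ (zero_le) hβ₀lt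
      have hsot0' : Sotto (Q' β₀) ⊆ Sotto (Q' (β₀ + 0)) := by rw [add_zero]
      refine Set.union_subset ?_ ?_
      · exact (h0sot.trans (sotto_mono hQβ₀)).trans hsot0'
      · refine Set.iUnion₂_subset fun γ hγ => ?_
        exact ((hsot γ hγ.1).trans (sotto_mono (hle γ β₀ hγ.2 hβ₀lt))).trans hsot0'
    -- pieces inside sottografici
    · beta_reduce
      intro α hα
      rw [if_neg (Sk_ne_zero hα)]
      exact hsot _ (Sk_add_mem β₀ hβ₀lt hα)
    -- twistability of the pieces (the recursive step)
    · beta_reduce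
      intro α hα
      rw [if_neg (Sk_ne_zero hα)]
      have hδSk : β₀ + α ∈ Sk k := Sk_add_mem β₀ hβ₀lt hα
      have hδlt : β₀ + α < κ.ord := hδSk.1
      have hβ₀mem : Q' β₀ ∈ {h | ∃ β < β₀ + α, h = Q' β} := by
        refine ⟨β₀, ?_, rfl⟩
        have := add_lt_add_right (Sk_isLimit hα).pos β₀
        rwa [add_zero] at this
      have hch' : ∀ a ∈ {h | ∃ β < β₀ + α, h = Q' β}, ∀ b ∈ {h | ∃ β < β₀ + α, h = Q' β},
          LeStar a b ↔ a ≤ b := by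
        rintro a ⟨βa, hβa, rfl⟩ b ⟨βb, hβb, rfl⟩
        exact hch _ (hsp1 _ (hβa.trans hδlt)) _ (hsp1 _ (hβb.trans hδlt))
      have h1 := ih (Pa (β₀ + α)) {h | ∃ β < β₀ + α, h = Q' β} (Q' β₀) hβ₀mem hch'
        (Ef (β₀ + α)) (htw _ hδSk)
      have hset : {h | h ∈ {h | ∃ β < β₀ + α, h = Q' β} ∧ Q' β₀ ≤ h}
          = {h | ∃ β < α, h = Q' (β₀ + β)} := by
        ext h'
        constructor
        · rintro ⟨⟨δ, hδ, rfl⟩, hge⟩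
          have hβ₀δ : β₀ ≤ δ := by
            by_contra hcon
            push_neg at hcon
            exact (hsp2 δ β₀ hcon hβ₀lt).2 (leStar_of_le hge)
          refine ⟨δ - β₀, ?_, ?_⟩
          · rwa [← add_lt_add_iff_left β₀, Ordinal.add_sub_cancel_of_le hβ₀δ]
          · rw [Ordinal.add_sub_cancel_of_le hβ₀δ]
        · rintro ⟨β, hβ, rfl⟩
          refine ⟨⟨β₀ + β, add_lt_add_right hβ β₀, rfl⟩, ?_⟩
          exact hle β₀ _ (le_self_add) ((add_lt_add_right hβ β₀).trans hδlt)
      rw [hset] at h1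
      exact h1
    -- the limit condition
    · beta_reduce
      intro α hα hsup
      rw [if_neg (Sk_ne_zero hα)]
      have hδSk : β₀ + α ∈ Sk k := Sk_add_mem β₀ hβ₀lt hα
      have hαlim : Order.IsSuccLimit α := Sk_isLimit hα
      have hSne : (Sk k ∩ Set.Iio α).Nonempty := by
        rcases Set.eq_empty_or_nonempty (Sk k ∩ Set.Iio α) with he | hne
        · rw [he, csSup_empty, Ordinal.bot_eq_zero] at hsup
          exact absurd hsup (Sk_ne_zero hα)
        · exact hne
      have hTbdd : BddAbove (Sk k ∩ Set.Iio (β₀ + α)) := ⟨β₀ + α, fun x hx => hx.2.le⟩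
      have hsup2 : β₀ + α = sSup (Sk k ∩ Set.Iio (β₀ + α)) := by
        apply le_antisymm
        · rw [Ordinal.add_le_iff_of_isSuccLimit hαlim]
          intro γ' hγ'
          have hex : ∃ γ ∈ Sk k ∩ Set.Iio α, γ' < γ := by
            by_contra hcon
            push_neg at hcon
            have : sSup (Sk k ∩ Set.Iio α) ≤ γ' := csSup_le hSne hcon
            rw [← hsup] at this
            exact absurd hγ' (not_lt.2 this)
          obtain ⟨γ, hγ, hγ'γ⟩ := hex
          refine le_trans (add_le_add_right hγ'γ.le β₀) (le_csSup hTbdd ?_)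
          exact ⟨Sk_add_mem β₀ hβ₀lt hγ.1, add_lt_add_right hγ.2 β₀⟩
        · refine csSup_le ⟨β₀ + hSne.choose, ?_⟩ fun x hx => hx.2.le
          exact ⟨Sk_add_mem β₀ hβ₀lt hSne.choose_spec.1, add_lt_add_right hSne.choose_spec.2 β₀⟩
      have hsub := hlim (β₀ + α) hδSk hsup2
      intro x hx
      rcases hsub hx with hx0 | hxU
      · exact Or.inl (by rw [if_pos rfl]; exact Or.inl hx0)
      · simp only [Set.mem_iUnion, exists_prop] at hxU
        obtain ⟨γ, ⟨hγSk, hγlt⟩, hxγ⟩ := hxU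
        rcases le_or_gt γ β₀ with hc | hc
        · refine Or.inl ?_
          rw [if_pos rfl]
          exact Or.inr (Set.mem_biUnion ⟨hγSk, hc⟩ hxγ)
        · obtain ⟨hmemSk, hde⟩ := Sk_sub_mem hγSk hc
          refine Or.inr ?_
          simp only [Set.mem_iUnion, exists_prop]
          refine ⟨γ - β₀, ⟨hmemSk, ?_⟩, ?_⟩
          · rw [Set.mem_Iio]
            rwa [← add_lt_add_iff_left β₀, hde]
          · rw [if_neg (Sk_ne_zero hmemSk), hde]
            exact hxγ
end Tail

/-- If `(P, Q₁)` and `(P, Q₂)` are strong `(k+1)`-unbounded pairs in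
`^{ω_n}ω` sharing a common final segment above some `f ∈ Q₁ ∩ Q₂`, then a set `E` is
`(k+1)`-twistable for `(P, Q₁)` if and only if it is `(k+1)`-twistable for `(P, Q₂)`. -/
theorem twistable_depends_on_tail (n k : ℕ)
    (P Q₁ Q₂ : Set ((Cardinal.aleph n).ord.ToType → ℕ))
    (h₁ : IsStrongUnboundedPair (Cardinal.aleph (k + 1)) P Q₁)
    (h₂ : IsStrongUnboundedPair (Cardinal.aleph (k + 1)) P Q₂)
    (f : (Cardinal.aleph n).ord.ToType → ℕ) (hf₁ : f ∈ Q₁) (hf₂ : f ∈ Q₂)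
    (htail : {g ∈ Q₁ | f ≤ g} = {g ∈ Q₂ | f ≤ g})
    (E : Set ((Cardinal.aleph n).ord.ToType × ℕ)) :
    TwistablePair (k + 1) P Q₁ E ↔ TwistablePair (k + 1) P Q₂ E := by
  constructor
  · intro h
    have h' := twistable_tail_of (k + 1) P Q₁ f hf₁ h₁.2.1 E h
    rw [htail] at h'
    exact twistable_of_tail (k + 1) P Q₂ f hf₂ h₂.2.2.1 E h'
  · intro h
    have h' := twistable_tail_of (k + 1) P Q₂ f hf₂ h₂.2.1 E h
    rw [← htail] at h'
    exact twistable_of_tail (k + 1) P Q₁ f hf₁ h₁.2.2.1 E h'
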